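/- Let f ∈ k[x₀,…,x_n] be a nonzero polynomial, z a variable, and ν an additional variable, with a monomial order on k[x₀,…,x_n, ν] in which ν exceeds every other variable. If gcd(LM(f), z) = 1, then S(ν·z − z, ν·f) reduces, via division by ν·z − z, to −(z·f)/LC(f), where LC(f) is the leading coefficient of f. -/

import Mathlib

open MvPolynomial
open scoped MonomialOrder

/-- The leading exponent (leading monomial) of a multivariate polynomial with
respect to a monomial order. -/
noncomputable def leadExp {σ K : Type*} [Field K] (m : MonomialOrder σ)
    (f : MvPolynomial σ K) : σ →₀ ℕ :=
  m.toSyn.symm (f.support.sup fun d => m.toSyn d)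

/-- The leading coefficient of a multivariate polynomial with respect to a
monomial order. -/
noncomputable def leadCoeff {σ K : Type*} [Field K] (m : MonomialOrder σ)
    (f : MvPolynomial σ K) : K :=
  f.coeff (leadExp m f)

/-- The S-polynomial `S(f,g) = (lcm(LM f, LM g)/LT f)·f − (lcm(LM f, LM g)/LT g)·g`. -/
noncomputable def sPoly {σ K : Type*} [Field K] (m : MonomialOrder σ)
    (f g : MvPolynomial σ K) : MvPolynomial σ K :=
  monomial (leadExp m f ⊔ leadExp m g - leadExp m f) (leadCoeff m f)⁻¹ * f -
    monomial (leadExp m f ⊔ leadExp m g - leadExp m g) (leadCoeff m g)⁻¹ * g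

/-!
Factoring `ν·z − z = (ν − 1)·z` shows that it is monic with leading monomial `ν·z`, while `ν·f`
has leading term `ν·LT(f)`. As `LM(f)` is coprime to `z`, the lcm of the two leading monomials is
`ν·z·LM(f)`, and expanding the S-polynomial gives `q·(ν·z − z) − z·f/LC(f)` with
`q = LM(f) − f/LC(f)`. The leading monomial of `q·(ν·z − z)` contains `ν`, whereas no monomial of
`z·f` does, so it survives in the S-polynomial.
-/

open MonomialOrder

lemma leadExp_eq_degree {σ K : Type*} [Field K] (m : MonomialOrder σ) (f : MvPolynomial σ K) :
    leadExp m f = m.degree f := rfl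

lemma leadCoeff_eq_leadingCoeff {σ K : Type*} [Field K] (m : MonomialOrder σ)
    (f : MvPolynomial σ K) : leadCoeff m f = m.leadingCoeff f := rfl

lemma Finsupp.add_single_sup_add_of_apply_eq_zero {σ : Type*} (a e : σ →₀ ℕ) {z : σ}
    (hz : e z = 0) : (a + single z 1) ⊔ (a + e) = a + single z 1 + e := by
  ext i
  rcases eq_or_ne i z with rfl | hi
  · simp [hz]
  · simp [hi.symm]

lemma MvPolynomial.coeff_eq_zero_of_apply_ne_zero {σ R : Type*} [CommSemiring R]
    {f : MvPolynomial σ R} {ν : σ} (hνf : ∀ d ∈ f.support, d ν = 0) {d : σ →₀ ℕ}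
    (hd : d ν ≠ 0) : f.coeff d = 0 :=
  notMem_support_iff.mp fun h => hd (hνf d h)

namespace MonomialOrder

variable {σ R : Type*} (m : MonomialOrder σ)

lemma degree_le_degree_sub_of_coeff_eq_zero [CommRing R] {p r : MvPolynomial σ R} (hp : p ≠ 0)
    (hr : r.coeff (m.degree p) = 0) : m.degree p ≼[m] m.degree (p - r) :=
  m.le_degree (by simpa [coeff_sub, hr] using hp)

lemma X_mul_X_sub_X_eq [CommRing R] (ν z : σ) :
    (X ν * X z - X z : MvPolynomial σ R) = (X ν - C 1) * X z := by
  rw [map_one]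
  ring

lemma monic_X_mul_X_sub_X [CommRing R] (ν z : σ) :
    m.Monic (X ν * X z - X z : MvPolynomial σ R) := by
  rw [X_mul_X_sub_X_eq]
  exact (m.monic_X_sub_C ν 1).mul monic_X

lemma degree_X_mul_X_sub_X [CommRing R] [IsDomain R] (ν z : σ) :
    m.degree (X ν * X z - X z : MvPolynomial σ R) = Finsupp.single ν 1 + Finsupp.single z 1 := by
  rw [X_mul_X_sub_X_eq, degree_mul (m.monic_X_sub_C ν 1).ne_zero (X_ne_zero z),
    degree_X_sub_C, degree_X]

end MonomialOrder

lemma sPoly_X_mul_X_sub_X_X_mul {σ K : Type*} [Field K] (m : MonomialOrder σ) (ν z : σ)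
    {f : MvPolynomial σ K} (hf : f ≠ 0) (hz : m.degree f z = 0) :
    sPoly m (X ν * X z - X z) (X ν * f) =
      (monomial (m.degree f) 1 - C (m.leadingCoeff f)⁻¹ * f) * (X ν * X z - X z) -
        C (m.leadingCoeff f)⁻¹ * (X z * f) := by
  have hdeg : m.degree (X ν * f) = Finsupp.single ν 1 + m.degree f := by
    rw [degree_mul (X_ne_zero ν) hf, degree_X]
  have hlcm_sub : Finsupp.single ν 1 + Finsupp.single z 1 + m.degree f -
      (Finsupp.single ν 1 + m.degree f) = Finsupp.single z 1 := by
    rw [add_right_comm, add_tsub_cancel_left]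
  simp only [sPoly, leadExp_eq_degree, leadCoeff_eq_leadingCoeff, degree_X_mul_X_sub_X, hdeg,
    (monic_X_mul_X_sub_X m ν z).leadingCoeff_eq_one, leadingCoeff_mul, leadingCoeff_X, one_mul,
    inv_one, Finsupp.add_single_sup_add_of_apply_eq_zero _ _ hz, add_tsub_cancel_left, hlcm_sub,
    ← C_mul_X_eq_monomial]
  ring

theorem sPoly_nu_top_coprime_general {σ K : Type*} [Field K] (m : MonomialOrder σ)
    (ν z : σ)
    (f : MvPolynomial σ K) (hf : f ≠ 0)
    (hνf : ∀ d ∈ f.support, d ν = 0)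
    (hz : leadExp m f z = 0) :
    ∃ q : MvPolynomial σ K,
      sPoly m (X ν * X z - X z) (X ν * f) =
          q * (X ν * X z - X z) - C (leadCoeff m f)⁻¹ * (X z * f) ∧
      (leadExp m (q * (X ν * X z - X z)) ≼[m]
        leadExp m (sPoly m (X ν * X z - X z) (X ν * f))) := by
  set q := monomial (m.degree f) 1 - C (m.leadingCoeff f)⁻¹ * f
  have hS := sPoly_X_mul_X_sub_X_X_mul m ν z hf hz
  refine ⟨q, hS, ?_⟩
  rw [hS, leadExp_eq_degree, leadExp_eq_degree]
  rcases eq_or_ne q 0 with hq | hq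
  · simp [hq, degree_zero]
  have hg := (monic_X_mul_X_sub_X (R := K) m ν z).ne_zero
  apply degree_le_degree_sub_of_coeff_eq_zero m (mul_ne_zero hq hg)
  -- the leading monomial of `q·(ν·z − z)` has positive `ν`-degree
  rw [degree_mul hq hg, degree_X_mul_X_sub_X, ← add_assoc, add_comm _ (Finsupp.single z 1),
    coeff_C_mul, coeff_X_mul, coeff_eq_zero_of_apply_ne_zero hνf (by simp), mul_zero]

/-- Let `ν` be a variable exceeding all others in the monomial order, `z` another
variable, and `f` a nonzero polynomial not involving `ν` whose leading monomial is
coprime to `z`.  Then `S(ν·z − z, ν·f)` reduces, via division by `ν·z − z`, to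
`−(z·f)/LC(f)`: there is `q` with
`S(ν·z − z, ν·f) = q·(ν·z − z) − (LC f)⁻¹·(z·f)` and with the leading monomial of
`q·(ν·z − z)` at most that of the S-polynomial. -/
theorem sPoly_nu_top_coprime {σ K : Type*} [Field K] (m : MonomialOrder σ)
    (ν z : σ) (hzν : z ≠ ν)
    (helim : ∀ d e : σ →₀ ℕ, d ν < e ν → d ≺[m] e)
    (f : MvPolynomial σ K) (hf : f ≠ 0)
    (hνf : ∀ d ∈ f.support, d ν = 0)
    (hz : leadExp m f z = 0) :
    ∃ q : MvPolynomial σ K,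
      sPoly m (X ν * X z - X z) (X ν * f) =
          q * (X ν * X z - X z) - C (leadCoeff m f)⁻¹ * (X z * f) ∧
      (leadExp m (q * (X ν * X z - X z)) ≼[m]
        leadExp m (sPoly m (X ν * X z - X z) (X ν * f))) :=
  sPoly_nu_top_coprime_general m ν z f hf hνf hz
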